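/- The rebasing rule is height-preserving admissible in the nested sequent calculus for GL: if Γ{Δ{·}, [Δ']} has a cut-free derivation of height h and depth(Δ{-}) > 0, then Γ{Δ{Δ'}} has a cut-free derivation of height at most h. -/

import Mathlib

/-- Formulas of GL in negation normal form. -/
inductive Formula : Type where
  | pos : ℕ → Formula
  | neg : ℕ → Formula
  | and : Formula → Formula → Formula
  | or  : Formula → Formula → Formula
  | box : Formula → Formula
  | dia : Formula → Formula
deriving DecidableEq

/-- Negation `A⊥` of a formula, via De Morgan duality. -/
def Formula.negate : Formula → Formula
  | .pos a => .neg a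
  | .neg a => .pos a
  | .and A B => .or A.negate B.negate
  | .or A B => .and A.negate B.negate
  | .box A => .dia A.negate
  | .dia A => .box A.negate

/-- An element of a nested sequent: a formula or a nested (bracketed) sequent. -/
inductive SeqElem : Type where
  | fml : Formula → SeqElem
  | nest : List SeqElem → SeqElem

/-- A nested sequent. -/
abbrev Sequent := List SeqElem

/-- Unary contexts: a nested sequent with a single hole. -/
inductive Ctx : Type where
  | hole : Sequent → Ctx
  | nest : Sequent → Ctx → Ctx

/-- Fill the hole of a context with a sequent. -/
def Ctx.fill : Ctx → Sequent → Sequent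
  | .hole Δ, Γ => Δ ++ Γ
  | .nest Δ c, Γ => .nest (c.fill Γ) :: Δ

/-- Depth of a context: number of brackets surrounding the hole. -/
def Ctx.depth : Ctx → ℕ
  | .hole _ => 0
  | .nest _ c => c.depth + 1

/-- Equivalence of nested sequents up to (deep) exchange. -/
inductive SeqEquiv : Sequent → Sequent → Prop where
  | nil : SeqEquiv [] []
  | cons {e : SeqElem} {Γ Δ : Sequent} : SeqEquiv Γ Δ → SeqEquiv (e :: Γ) (e :: Δ)
  | consNest {Γ' Δ' Γ Δ : Sequent} :
      SeqEquiv Γ' Δ' → SeqEquiv Γ Δ → SeqEquiv (.nest Γ' :: Γ) (.nest Δ' :: Δ)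
  | swap (a b : SeqElem) (Γ : Sequent) : SeqEquiv (a :: b :: Γ) (b :: a :: Γ)
  | trans {Γ Δ Θ : Sequent} : SeqEquiv Γ Δ → SeqEquiv Δ Θ → SeqEquiv Γ Θ

/-- `DerivH n Γ`: `Γ` has a cut-free derivation of height at most `n`. -/
inductive DerivH : ℕ → Sequent → Prop where
  | id (n : ℕ) (c : Ctx) (a : ℕ) :
      DerivH n (c.fill [.fml (.pos a), .fml (.neg a)])
  | and {n : ℕ} {c : Ctx} {A B : Formula} :
      DerivH n (c.fill [.fml A]) → DerivH n (c.fill [.fml B]) →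
      DerivH (n + 1) (c.fill [.fml (.and A B)])
  | or {n : ℕ} {c : Ctx} {A B : Formula} :
      DerivH n (c.fill [.fml A, .fml B]) →
      DerivH (n + 1) (c.fill [.fml (.or A B)])
  | box {n : ℕ} {c : Ctx} {A : Formula} :
      DerivH n (c.fill [.nest [.fml (.dia A.negate), .fml A]]) →
      DerivH (n + 1) (c.fill [.fml (.box A)])
  | dia {n : ℕ} (c d : Ctx) {A : Formula} :
      0 < d.depth →
      DerivH n (c.fill (d.fill [.fml A] ++ [.fml (.dia A)])) →
      DerivH (n + 1) (c.fill (d.fill [] ++ [.fml (.dia A)]))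
  | exch {n : ℕ} {Γ Δ : Sequent} : SeqEquiv Γ Δ → DerivH n Γ → DerivH n Δ
  | up {n : ℕ} {Γ : Sequent} : DerivH n Γ → DerivH (n + 1) Γ

/-- Derivability where cut is permitted on formulas satisfying `P`. -/
inductive DerivWith (P : Formula → Prop) : Sequent → Prop where
  | id (c : Ctx) (a : ℕ) :
      DerivWith P (c.fill [.fml (.pos a), .fml (.neg a)])
  | and {c : Ctx} {A B : Formula} :
      DerivWith P (c.fill [.fml A]) → DerivWith P (c.fill [.fml B]) →
      DerivWith P (c.fill [.fml (.and A B)])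
  | or {c : Ctx} {A B : Formula} :
      DerivWith P (c.fill [.fml A, .fml B]) →
      DerivWith P (c.fill [.fml (.or A B)])
  | box {c : Ctx} {A : Formula} :
      DerivWith P (c.fill [.nest [.fml (.dia A.negate), .fml A]]) →
      DerivWith P (c.fill [.fml (.box A)])
  | dia (c d : Ctx) {A : Formula} :
      0 < d.depth →
      DerivWith P (c.fill (d.fill [.fml A] ++ [.fml (.dia A)])) →
      DerivWith P (c.fill (d.fill [] ++ [.fml (.dia A)]))
  | cut {c : Ctx} {A : Formula} : P A →
      DerivWith P (c.fill [.fml A]) → DerivWith P (c.fill [.fml A.negate]) →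
      DerivWith P (c.fill [])
  | exch {Γ Δ : Sequent} : SeqEquiv Γ Δ → DerivWith P Γ → DerivWith P Δ

/-- Cut-free derivability. -/
abbrev Deriv : Sequent → Prop := DerivWith (fun _ => False)

/-!
A rebasing step deletes a bracket `[Δ']` at a node `x` and adds `Δ'` to a node strictly below `x`.
It touches no formula and keeps every strict ancestor relation between nodes, which is all that
the side condition `0 < d.depth` of the ◇-rule asks for. Hence the conclusion `c{d{}, F}` of a
rule instance (`F` its principal formulas) is carried to a sequent `c'{d'{}, F}` of the same
shape, uniformly in what fills the two holes, so the premises are rebased along with it and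
induction on the derivation keeps the height. Since sequents are taken up to deep exchange, the
case analysis rests on cancelling a bracket on both sides of an equivalence; when the receiving
node lies on the path to the holes of the rule instance, the same commutation is needed for
adding a sequent at a single node.
-/

infix:50 " ≋ " => SeqEquiv

namespace SeqEquiv

theorem refl : ∀ Γ : Sequent, Γ ≋ Γ
  | [] => .nil
  | _ :: Γ => .cons (refl Γ)

theorem of_eq {Γ Δ : Sequent} (h : Γ = Δ) : Γ ≋ Δ := h ▸ refl Γ

theorem symm {Γ Δ : Sequent} (h : Γ ≋ Δ) : Δ ≋ Γ := by
  induction h with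
  | nil => exact .nil
  | cons _ ih => exact .cons ih
  | consNest _ _ ih ih' => exact .consNest ih ih'
  | swap a b Γ => exact .swap b a Γ
  | trans _ _ ih ih' => exact ih'.trans ih

instance : Trans SeqEquiv SeqEquiv SeqEquiv := ⟨trans⟩

theorem of_perm {Γ Δ : Sequent} (h : Γ.Perm Δ) : Γ ≋ Δ := by
  induction h with
  | nil => exact .nil
  | cons _ _ ih => exact .cons ih
  | swap a b Γ => exact .swap b a Γ
  | trans _ _ ih ih' => exact ih.trans ih'

theorem append_right {Γ Δ : Sequent} (h : Γ ≋ Δ) (X : Sequent) : Γ ++ X ≋ Δ ++ X := by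
  induction h with
  | nil => exact refl X
  | cons _ ih => exact .cons ih
  | consNest h _ _ ih => exact .consNest h ih
  | swap a b Γ => exact .swap a b (Γ ++ X)
  | trans _ _ ih ih' => exact ih.trans ih'

theorem append_left (X : Sequent) {Γ Δ : Sequent} (h : Γ ≋ Δ) : X ++ Γ ≋ X ++ Δ := by
  induction X with
  | nil => exact h
  | cons _ _ ih => exact .cons ih

theorem append_comm (Γ Δ : Sequent) : Γ ++ Δ ≋ Δ ++ Γ := of_perm List.perm_append_comm

theorem middle (Γ : Sequent) (a : SeqElem) (Δ : Sequent) : Γ ++ a :: Δ ≋ a :: (Γ ++ Δ) :=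
  of_perm List.perm_middle

end SeqEquiv

inductive SeqElem.Equiv : SeqElem → SeqElem → Prop
  | fml (A : Formula) : SeqElem.Equiv (.fml A) (.fml A)
  | nest {S T : Sequent} : S ≋ T → SeqElem.Equiv (.nest S) (.nest T)

namespace SeqElem.Equiv

theorem refl : ∀ e : SeqElem, e.Equiv e
  | .fml A => .fml A
  | .nest S => .nest (.refl S)

theorem trans {e f g : SeqElem} : e.Equiv f → f.Equiv g → e.Equiv g
  | .fml _, h => h
  | .nest h, .nest h' => .nest (h.trans h')

theorem forall₂_trans : ∀ {Γ Δ Θ : Sequent}, List.Forall₂ Equiv Γ Δ →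
    List.Forall₂ Equiv Δ Θ → List.Forall₂ Equiv Γ Θ
  | _, _, _, .nil, .nil => .nil
  | _, _, _, .cons h hs, .cons h' hs' => .cons (h.trans h') (forall₂_trans hs hs')

end SeqElem.Equiv

namespace SeqEquiv

theorem cons_of_equiv {a b : SeqElem} {Γ Δ : Sequent} (hab : a.Equiv b) (h : Γ ≋ Δ) :
    a :: Γ ≋ b :: Δ := by
  cases hab with
  | fml => exact .cons h
  | nest hS => exact .consNest hS h

theorem of_forall₂ : ∀ {Γ Δ : Sequent}, List.Forall₂ SeqElem.Equiv Γ Δ → Γ ≋ Δ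
  | _, _, .nil => .nil
  | _, _, .cons h hs => cons_of_equiv h (of_forall₂ hs)

theorem exists_forall₂_perm {Γ Δ : Sequent} (h : Γ ≋ Δ) :
    ∃ Θ, List.Forall₂ SeqElem.Equiv Γ Θ ∧ Θ.Perm Δ := by
  induction h with
  | nil => exact ⟨[], .nil, .nil⟩
  | @cons e _ _ _ ih =>
    obtain ⟨Θ, hf, hp⟩ := ih
    exact ⟨e :: Θ, .cons (.refl e) hf, hp.cons e⟩
  | @consNest _ Δ' _ _ hS _ _ ih =>
    obtain ⟨Θ, hf, hp⟩ := ih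
    exact ⟨.nest Δ' :: Θ, .cons (.nest hS) hf, hp.cons _⟩
  | swap a b Γ =>
    exact ⟨a :: b :: Γ, List.forall₂_same.2 fun x _ => .refl x, .swap b a Γ⟩
  | trans _ _ ih ih' =>
    obtain ⟨Θ₁, hf₁, hp₁⟩ := ih
    obtain ⟨Θ₂, hf₂, hp₂⟩ := ih'
    obtain ⟨Θ, hf, hp⟩ := List.perm_comp_forall₂ hp₁ hf₂
    exact ⟨Θ, SeqElem.Equiv.forall₂_trans hf₁ hf, hp.trans hp₂⟩

theorem exists_of_cons {a : SeqElem} {Γ Δ : Sequent} (h : a :: Γ ≋ Δ) :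
    ∃ Δ₁ b Δ₂, Δ = Δ₁ ++ b :: Δ₂ ∧ a.Equiv b ∧ Γ ≋ Δ₁ ++ Δ₂ := by
  obtain ⟨_, hf, hp⟩ := h.exists_forall₂_perm
  obtain _ | ⟨hab, hf⟩ := hf
  obtain ⟨Δ₁, Δ₂, rfl⟩ := List.append_of_mem (hp.subset List.mem_cons_self)
  exact ⟨Δ₁, _, Δ₂, rfl, hab, (of_forall₂ hf).trans (of_perm (hp.trans List.perm_middle).cons_inv)⟩

theorem nest_cons_cases {S B : Sequent} {Γ Δ : Sequent}
    (h : SeqElem.nest S :: Γ ≋ SeqElem.nest B :: Δ) :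
    (S ≋ B ∧ Γ ≋ Δ) ∨ ∃ Θ, Γ ≋ SeqElem.nest B :: Θ ∧ Δ ≋ SeqElem.nest S :: Θ := by
  obtain ⟨Δ₁, _, Δ₂, hΔ, hS, hΓ⟩ := h.exists_of_cons
  obtain _ | hST := hS
  cases Δ₁ with
  | nil =>
    simp only [List.nil_append, List.cons.injEq, SeqElem.nest.injEq] at hΔ
    obtain ⟨rfl, rfl⟩ := hΔ
    exact .inl ⟨hST, hΓ⟩
  | cons x Δ₁ =>
    obtain ⟨rfl, rfl⟩ := List.cons.inj hΔ
    exact .inr ⟨Δ₁ ++ Δ₂, hΓ, (middle _ _ _).trans (consNest hST.symm (refl _))⟩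

end SeqEquiv

def BracketFree (F : Sequent) : Prop := ∀ S, SeqElem.nest S ∉ F

theorem bracketFree_nil : BracketFree [] := fun _ => List.not_mem_nil

theorem SeqEquiv.nest_cons_of_append {S Γ Q F : Sequent} (hF : BracketFree F)
    (h : SeqElem.nest S :: Γ ≋ Q ++ F) :
    ∃ Θ, Q ≋ SeqElem.nest S :: Θ ∧ Γ ≋ Θ ++ F := by
  obtain ⟨Δ₁, _, Δ₂, hΔ, hS, hΓ⟩ := h.exists_of_cons
  obtain _ | hST := hS
  rcases List.append_eq_append_iff.1 hΔ with ⟨K, rfl, hF'⟩ | ⟨K, rfl, hK⟩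
  · exact absurd (hF' ▸ List.mem_append_right K List.mem_cons_self) (hF _)
  · cases K with
    | nil => exact absurd (hK ▸ List.mem_cons_self) (hF _)
    | cons x K =>
      obtain ⟨rfl, rfl⟩ := List.cons.inj hK
      exact ⟨Δ₁ ++ K, (middle _ _ _).trans (consNest hST.symm (refl _)),
        hΓ.trans (of_eq (List.append_assoc _ _ _).symm)⟩

namespace Ctx

theorem fill_congr (c : Ctx) {Γ Δ : Sequent} (h : Γ ≋ Δ) : c.fill Γ ≋ c.fill Δ := by
  induction c with
  | hole Θ => exact .append_left Θ h
  | nest Θ c ih => exact .consNest ih (.refl Θ)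

def addTop : Ctx → Sequent → Ctx
  | .hole Θ, X => .hole (Θ ++ X)
  | .nest Θ c, X => .nest (Θ ++ X) c

theorem addTop_fill (c : Ctx) (X Γ : Sequent) : (c.addTop X).fill Γ ≋ c.fill Γ ++ X := by
  cases c with
  | hole Θ =>
    simp only [addTop, fill, List.append_assoc]
    exact .append_left Θ (.append_comm X Γ)
  | nest Θ c => exact .refl _

def comp : Ctx → Ctx → Ctx
  | .hole Θ, e => e.addTop Θ
  | .nest Θ c, e => .nest Θ (c.comp e)

theorem comp_fill (c e : Ctx) (Γ : Sequent) : (c.comp e).fill Γ ≋ c.fill (e.fill Γ) := by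
  induction c with
  | hole Θ => exact (e.addTop_fill Θ Γ).trans (.append_comm _ Θ)
  | nest Θ c ih => exact .consNest ih (.refl Θ)

theorem fill_hole_nest (Δ Δd : Sequent) (d₀ : Ctx) (Y W : Sequent) :
    (Ctx.hole Δ).fill ((Ctx.nest Δd d₀).fill Y ++ W) ≋ .nest (d₀.fill Y) :: (Δ ++ Δd ++ W) := by
  simp only [fill, List.cons_append, List.append_assoc]
  exact .middle _ _ _

end Ctx

def Graft (U Γ Γ' : Sequent) : Prop := ∃ g : Ctx, Γ ≋ g.fill [] ∧ Γ' ≋ g.fill U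

namespace Graft

variable {U : Sequent}

theorem congr {Γ Δ Δ' Γ' : Sequent} (hΓ : Γ ≋ Δ) (h : Graft U Δ Δ') (hΓ' : Δ' ≋ Γ') :
    Graft U Γ Γ' :=
  let ⟨g, hΔ, hΔ'⟩ := h
  ⟨g, hΓ.trans hΔ, hΓ'.symm.trans hΔ'⟩

theorem append_right {Γ Γ' : Sequent} (h : Graft U Γ Γ') (X : Sequent) :
    Graft U (Γ ++ X) (Γ' ++ X) :=
  let ⟨g, hΓ, hΓ'⟩ := h
  ⟨g.addTop X, (hΓ.append_right X).trans (g.addTop_fill X []).symm,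
    (hΓ'.append_right X).trans (g.addTop_fill X U).symm⟩

theorem cons (a : SeqElem) {Γ Γ' : Sequent} (h : Graft U Γ Γ') : Graft U (a :: Γ) (a :: Γ') :=
  .congr (.append_comm [a] Γ) (h.append_right [a]) (.append_comm Γ' [a])

theorem nest {S S' : Sequent} (h : Graft U S S') (R : Sequent) :
    Graft U (.nest S :: R) (.nest S' :: R) :=
  let ⟨g, hS, hS'⟩ := h
  ⟨.nest R g, .consNest hS (.refl R), .consNest hS' (.refl R)⟩

theorem of_append {G G' Q F : Sequent} (h : Graft U G G') (hF : BracketFree F)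
    (hG : G ≋ Q ++ F) : ∃ Q', Graft U Q Q' ∧ G' ≋ Q' ++ F := by
  obtain ⟨g, hg, hg'⟩ := h
  cases g with
  | hole Θ =>
    simp only [Ctx.fill, List.append_nil] at hg hg'
    refine ⟨Q ++ U, ⟨.hole Q, .of_eq (List.append_nil Q).symm, .refl _⟩, ?_⟩
    calc G' ≋ Θ ++ U := hg'
      _ ≋ Q ++ F ++ U := (hg.symm.trans hG).append_right U
      _ ≋ Q ++ U ++ F := by
        simp only [List.append_assoc]; exact .append_left Q (.append_comm F U)
  | nest Θ g₀ =>
    obtain ⟨Ξ, hQ, hΘ⟩ := (hg.symm.trans hG).nest_cons_of_append hF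
    exact ⟨.nest (g₀.fill U) :: Ξ, ⟨.nest Ξ g₀, hQ, .refl _⟩, hg'.trans (.consNest (.refl _) hΘ)⟩

theorem nest_cons_cases {G G' B Δ : Sequent} (h : Graft U G G') (hG : G ≋ .nest B :: Δ) :
    (∃ Δ', Graft U Δ Δ' ∧ G' ≋ .nest B :: Δ') ∨
    (∃ B', Graft U B B' ∧ G' ≋ .nest B' :: Δ) := by
  obtain ⟨g, hg, hg'⟩ := h
  cases g with
  | hole Θ =>
    simp only [Ctx.fill, List.append_nil] at hg hg'
    exact .inl ⟨Δ ++ U, ⟨.hole Δ, .of_eq (List.append_nil Δ).symm, .refl _⟩,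
      hg'.trans ((hg.symm.trans hG).append_right U)⟩
  | nest Θ g₀ =>
    rcases (hg.symm.trans hG).nest_cons_cases with ⟨hB, hΘ⟩ | ⟨Ξ, hΘ, hΔ⟩
    · exact .inr ⟨g₀.fill U, ⟨g₀, hB.symm, .refl _⟩, hg'.trans (.consNest (.refl _) hΘ)⟩
    · exact .inl ⟨.nest (g₀.fill U) :: Ξ, ⟨.nest Ξ g₀, hΔ, .refl _⟩,
        hg'.trans ((SeqEquiv.consNest (.refl _) hΘ).trans (.swap _ _ _))⟩

end Graft

/-- `graft g U R` is the rebasing rule at the root, for `Δ{-} = [g{-}], R`. -/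
inductive Rebase : Sequent → Sequent → Prop
  | graft (g : Ctx) (U R : Sequent) :
      Rebase (.nest (g.fill []) :: .nest U :: R) (.nest (g.fill U) :: R)
  | inside {S S' : Sequent} (R : Sequent) : Rebase S S' → Rebase (.nest S :: R) (.nest S' :: R)
  | equiv {Γ Δ Δ' Γ' : Sequent} : Γ ≋ Δ → Rebase Δ Δ' → Δ' ≋ Γ' → Rebase Γ Γ'

namespace Rebase

theorem append_right {Γ Γ' : Sequent} (h : Rebase Γ Γ') (X : Sequent) :
    Rebase (Γ ++ X) (Γ' ++ X) := by
  induction h with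
  | graft g U R => exact .graft g U (R ++ X)
  | inside R h => exact .inside (R ++ X) h
  | equiv hΓ _ hΓ' ih => exact .equiv (hΓ.append_right X) ih (hΓ'.append_right X)

theorem append_left (X : Sequent) {Γ Γ' : Sequent} (h : Rebase Γ Γ') :
    Rebase (X ++ Γ) (X ++ Γ') :=
  .equiv (.append_comm X Γ) (h.append_right X) (.append_comm Γ' X)

theorem cons (a : SeqElem) {Γ Γ' : Sequent} (h : Rebase Γ Γ') : Rebase (a :: Γ) (a :: Γ') :=
  h.append_left [a]

theorem fill (c : Ctx) {Γ Γ' : Sequent} (h : Rebase Γ Γ') : Rebase (c.fill Γ) (c.fill Γ') := by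
  induction c with
  | hole Θ => exact h.append_left Θ
  | nest Θ c ih => exact .inside Θ ih

theorem of_graft {U T T' Δ Δ₀ : Sequent} (h : Graft U T T') (hΔ : Δ ≋ .nest U :: Δ₀) :
    Rebase (.nest T :: Δ) (.nest T' :: Δ₀) :=
  let ⟨g, hT, hT'⟩ := h
  .equiv (.consNest hT hΔ) (.graft g U Δ₀) (.consNest hT'.symm (.refl Δ₀))

theorem move_into {g : Ctx} {Δ Δ₀ : Sequent} (hΔ : Δ ≋ .nest (g.fill []) :: Δ₀) (P : Sequent) :
    Rebase (.nest P :: Δ) (.nest (g.fill P) :: Δ₀) :=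
  .equiv ((SeqEquiv.consNest (.refl P) hΔ).trans (.swap _ _ _)) (.graft g P Δ₀) (.refl _)

theorem of_depth_pos {d : Ctx} (hd : 0 < d.depth) (Δ' : Sequent) :
    Rebase (d.fill [] ++ [.nest Δ']) (d.fill Δ') := by
  cases d with
  | hole => exact absurd hd (lt_irrefl 0)
  | nest Δd d₀ =>
    exact .equiv (.consNest (.refl _) (.append_comm Δd _)) (.graft d₀ Δ' Δd) (.refl _)

theorem of_append {G G' Q F : Sequent} (h : Rebase G G') (hF : BracketFree F)
    (hG : G ≋ Q ++ F) : ∃ Q', Rebase Q Q' ∧ G' ≋ Q' ++ F := by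
  induction h generalizing Q with
  | graft g U R =>
    obtain ⟨Θ, hQ, hΘ⟩ := hG.nest_cons_of_append hF
    obtain ⟨Θ', hΘ', hR⟩ := hΘ.nest_cons_of_append hF
    exact ⟨.nest (g.fill U) :: Θ', .equiv (hQ.trans (.consNest (.refl _) hΘ')) (.graft g U Θ')
      (.refl _), .consNest (.refl _) hR⟩
  | @inside S S' R hS _ =>
    obtain ⟨Θ, hQ, hR⟩ := hG.nest_cons_of_append hF
    exact ⟨.nest S' :: Θ, .equiv hQ (.inside Θ hS) (.refl _), .consNest (.refl _) hR⟩
  | equiv hΓ _ hΓ' ih =>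
    obtain ⟨Q', hQ, hG'⟩ := ih (hΓ.symm.trans hG)
    exact ⟨Q', hQ, hΓ'.symm.trans hG'⟩

theorem nest_cons_cases {G G' B Δ : Sequent} (h : Rebase G G') (hG : G ≋ .nest B :: Δ) :
    (∃ Δ', Rebase Δ Δ' ∧ G' ≋ .nest B :: Δ') ∨
    (∃ B', Rebase B B' ∧ G' ≋ .nest B' :: Δ) ∨
    (∃ U B' Δ₀, Graft U B B' ∧ Δ ≋ .nest U :: Δ₀ ∧ G' ≋ .nest B' :: Δ₀) ∨
    (∃ (g : Ctx) (Δ₀ : Sequent), Δ ≋ .nest (g.fill []) :: Δ₀ ∧ G' ≋ .nest (g.fill B) :: Δ₀) := by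
  induction h generalizing B Δ with
  | graft g U R =>
    rcases hG.nest_cons_cases with ⟨hB, hR⟩ | ⟨Θ, hΘ, hΔ⟩
    · exact .inr (.inr (.inl ⟨U, g.fill U, R, ⟨g, hB.symm, .refl _⟩, hR.symm, .refl _⟩))
    rcases hΘ.nest_cons_cases with ⟨hU, hR⟩ | ⟨Θ', hR, hΘ'⟩
    · exact .inr (.inr (.inr ⟨g, R, hΔ.trans (.consNest (.refl _) hR.symm),
        .consNest (g.fill_congr hU) (.refl R)⟩))
    · exact .inl ⟨.nest (g.fill U) :: Θ', .equiv (hΔ.trans (.consNest (.refl _) hΘ'))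
        (.graft g U Θ') (.refl _), (SeqEquiv.consNest (.refl _) hR).trans (.swap _ _ _)⟩
  | @inside S S' R hS _ =>
    rcases hG.nest_cons_cases with ⟨hB, hR⟩ | ⟨Θ, hΘ, hΔ⟩
    · exact .inr (.inl ⟨S', .equiv hB.symm hS (.refl _), .consNest (.refl _) hR⟩)
    · exact .inl ⟨.nest S' :: Θ, .equiv hΔ (.inside Θ hS) (.refl _),
        (SeqEquiv.consNest (.refl _) hΘ).trans (.swap _ _ _)⟩
  | equiv hΓ _ hΓ' ih =>
    have h' := hΓ'.symm
    rcases ih (hΓ.symm.trans hG) with ⟨Δ', hΔ, hG'⟩ | ⟨B', hB, hG'⟩ |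
      ⟨U, B', Δ₀, hB, hΔ, hG'⟩ | ⟨g, Δ₀, hΔ, hG'⟩
    exacts [.inl ⟨Δ', hΔ, h'.trans hG'⟩, .inr (.inl ⟨B', hB, h'.trans hG'⟩),
      .inr (.inr (.inl ⟨U, B', Δ₀, hB, hΔ, h'.trans hG'⟩)),
      .inr (.inr (.inr ⟨g, Δ₀, hΔ, h'.trans hG'⟩))]

end Rebase

/-- `c.fill (d.fill [] ++ F)` is the conclusion of a rule instance with principal formulas `F`:
for the ◇-rule `d` leads to where the premise adds `A`, for the other rules it is `.hole []`. -/
def CommutesAt (R : Sequent → Sequent → Prop) (c d : Ctx) : Prop :=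
  ∀ ⦃F G' : Sequent⦄, BracketFree F → R (c.fill (d.fill [] ++ F)) G' →
    ∃ c' d' : Ctx, (0 < d.depth → 0 < d'.depth) ∧ G' ≋ c'.fill (d'.fill [] ++ F) ∧
      ∀ Y W, R (c.fill (d.fill Y ++ W)) (c'.fill (d'.fill Y ++ W))

theorem CommutesAt.one_hole {R : Sequent → Sequent → Prop} {c : Ctx}
    (h : CommutesAt R c (.hole []))
    (hR : ∀ ⦃Γ Δ Δ' Γ'⦄, Γ ≋ Δ → R Δ Δ' → Δ' ≋ Γ' → R Γ Γ')
    {F G' : Sequent} (hF : BracketFree F) (hG : R (c.fill F) G') :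
    ∃ c' : Ctx, G' ≋ c'.fill F ∧ ∀ W, R (c.fill W) (c'.fill W) := by
  obtain ⟨c', d', -, hG', hW⟩ := h hF hG
  exact ⟨c'.comp (.hole (d'.fill [])), hG'.trans (c'.comp_fill (.hole _) F).symm,
    fun W => hR (.refl _) (hW [] W) (c'.comp_fill (.hole _) W).symm⟩

theorem commutesAt_hole_hole {R : Sequent → Sequent → Prop}
    (hR : ∀ ⦃Γ Δ Δ' Γ'⦄, Γ ≋ Δ → R Δ Δ' → Δ' ≋ Γ' → R Γ Γ')
    (happend : ∀ ⦃Γ Γ'⦄ X, R Γ Γ' → R (Γ ++ X) (Γ' ++ X))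
    (hframe : ∀ ⦃G G' Q F⦄, R G G' → BracketFree F → G ≋ Q ++ F → ∃ Q', R Q Q' ∧ G' ≋ Q' ++ F)
    (Δ Δd : Sequent) : CommutesAt R (.hole Δ) (.hole Δd) := by
  intro F G' hF h
  obtain ⟨Q', hQ, hG'⟩ := hframe h hF (Q := Δ ++ Δd) (.of_eq (by simp [Ctx.fill]))
  exact ⟨.hole Q', .hole [], fun h => absurd h (lt_irrefl 0), hG',
    fun Y W => hR (.of_eq (by simp [Ctx.fill])) (happend (Y ++ W) hQ) (.refl _)⟩

namespace Graft

variable {U : Sequent}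

theorem commutesAt_nest {Δ : Sequent} {c₀ d : Ctx} (ih : CommutesAt (Graft U) c₀ d) :
    CommutesAt (Graft U) (.nest Δ c₀) d := by
  intro F G' hF h
  rcases h.nest_cons_cases (.refl _) with ⟨Δ', hΔ, hG'⟩ | ⟨B', hB, hG'⟩
  · exact ⟨.nest Δ' c₀, d, id, hG', fun _ _ => hΔ.cons _⟩
  · obtain ⟨c₀', d', hd, hB', hY⟩ := ih hF hB
    exact ⟨.nest Δ c₀', d', hd, hG'.trans (.consNest hB' (.refl Δ)), fun Y W => (hY Y W).nest Δ⟩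

theorem commutesAt_hole_nest {Δ Δd : Sequent} {d₀ : Ctx}
    (ih : CommutesAt (Graft U) d₀ (.hole [])) :
    CommutesAt (Graft U) (.hole Δ) (.nest Δd d₀) := by
  intro F G' hF h
  have hP := Ctx.fill_hole_nest Δ Δd d₀
  rcases h.nest_cons_cases (hP [] F) with ⟨Δ', hΔ, hG'⟩ | ⟨B', hB, hG'⟩
  · obtain ⟨Q', hQ, hΔ'⟩ := hΔ.of_append hF (.refl _)
    exact ⟨.hole [], .nest Q' d₀, fun _ => Nat.succ_pos _, hG'.trans (.consNest (.refl _) hΔ'),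
      fun Y W => .congr (hP Y W) ((hQ.append_right W).cons _) (.refl _)⟩
  · obtain ⟨e, hB', hY⟩ := ih.one_hole (fun _ _ _ _ => congr) bracketFree_nil hB
    exact ⟨.hole [], .nest (Δ ++ Δd) e, fun _ => Nat.succ_pos _,
      hG'.trans (.consNest hB' (.refl _)), fun Y W => .congr (hP Y W) ((hY Y).nest _) (.refl _)⟩

theorem commutesAt : ∀ c d : Ctx, CommutesAt (Graft U) c d
  | .nest _ c₀, d => commutesAt_nest (commutesAt c₀ d)
  | .hole _, .nest _ d₀ => commutesAt_hole_nest (commutesAt d₀ (.hole []))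
  | .hole Δ, .hole Δd => commutesAt_hole_hole (fun _ _ _ _ => congr)
      (fun _ _ X h => h.append_right X) (fun _ _ _ _ h => h.of_append) Δ Δd
termination_by c d => c.depth + d.depth
decreasing_by all_goals simp only [Ctx.depth]; omega

end Graft

namespace Rebase

theorem commutesAt_nest {Δ : Sequent} {c₀ d : Ctx} (ih : CommutesAt Rebase c₀ d) :
    CommutesAt Rebase (.nest Δ c₀) d := by
  intro F G' hF h
  rcases h.nest_cons_cases (.refl _) with ⟨Δ', hΔ, hG'⟩ | ⟨B', hB, hG'⟩ |
    ⟨U, B', Δ₀, hB, hΔ, hG'⟩ | ⟨g, Δ₀, hΔ, hG'⟩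
  · exact ⟨.nest Δ' c₀, d, id, hG', fun _ _ => hΔ.cons _⟩
  · obtain ⟨c₀', d', hd, hB', hY⟩ := ih hF hB
    exact ⟨.nest Δ c₀', d', hd, hG'.trans (.consNest hB' (.refl Δ)),
      fun Y W => .inside Δ (hY Y W)⟩
  · obtain ⟨c₀', d', hd, hB', hY⟩ := Graft.commutesAt c₀ d hF hB
    exact ⟨.nest Δ₀ c₀', d', hd, hG'.trans (.consNest hB' (.refl Δ₀)),
      fun Y W => .of_graft (hY Y W) hΔ⟩
  · exact ⟨.nest Δ₀ (g.comp c₀), d, id, hG'.trans (.consNest (g.comp_fill c₀ _).symm (.refl Δ₀)),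
      fun Y W => .equiv (.refl _) (.move_into hΔ _) (.consNest (g.comp_fill c₀ _).symm (.refl Δ₀))⟩

theorem commutesAt_hole_nest {Δ Δd : Sequent} {d₀ : Ctx} (ih : CommutesAt Rebase d₀ (.hole [])) :
    CommutesAt Rebase (.hole Δ) (.nest Δd d₀) := by
  intro F G' hF h
  have hP := Ctx.fill_hole_nest Δ Δd d₀
  rcases h.nest_cons_cases (hP [] F) with ⟨Δ', hΔ, hG'⟩ | ⟨B', hB, hG'⟩ |
    ⟨U, B', Δ₀, hB, hΔ, hG'⟩ | ⟨g, Δ₀, hΔ, hG'⟩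
  · obtain ⟨Q', hQ, hΔ'⟩ := hΔ.of_append hF (.refl _)
    exact ⟨.hole [], .nest Q' d₀, fun _ => Nat.succ_pos _, hG'.trans (.consNest (.refl _) hΔ'),
      fun Y W => .equiv (hP Y W) ((hQ.append_right W).cons _) (.refl _)⟩
  · obtain ⟨e, hB', hY⟩ := ih.one_hole (fun _ _ _ _ => equiv) bracketFree_nil hB
    exact ⟨.hole [], .nest (Δ ++ Δd) e, fun _ => Nat.succ_pos _,
      hG'.trans (.consNest hB' (.refl _)), fun Y W => .equiv (hP Y W) (.inside _ (hY Y)) (.refl _)⟩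
  · obtain ⟨Q₀, hQ, hΔ₀⟩ := hΔ.symm.nest_cons_of_append hF
    obtain ⟨e, hB', hY⟩ :=
      (Graft.commutesAt d₀ (.hole [])).one_hole (fun _ _ _ _ => Graft.congr) bracketFree_nil hB
    exact ⟨.hole [], .nest Q₀ e, fun _ => Nat.succ_pos _, hG'.trans (.consNest hB' hΔ₀),
      fun Y W => .equiv (hP Y W) (.of_graft (hY Y) (hQ.append_right W)) (.refl _)⟩
  · obtain ⟨Q₀, hQ, hΔ₀⟩ := hΔ.symm.nest_cons_of_append hF
    exact ⟨.hole [], .nest Q₀ (g.comp d₀), fun _ => Nat.succ_pos _,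
      hG'.trans (.consNest (g.comp_fill d₀ []).symm hΔ₀),
      fun Y W => .equiv (hP Y W) (.move_into (hQ.append_right W) _)
        (.consNest (g.comp_fill d₀ Y).symm (.refl _))⟩

theorem commutesAt : ∀ c d : Ctx, CommutesAt Rebase c d
  | .nest _ c₀, d => commutesAt_nest (commutesAt c₀ d)
  | .hole _, .nest _ d₀ => commutesAt_hole_nest (commutesAt d₀ (.hole []))
  | .hole Δ, .hole Δd => commutesAt_hole_hole (fun _ _ _ _ => equiv)
      (fun _ _ X h => h.append_right X) (fun _ _ _ _ h => h.of_append) Δ Δd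
termination_by c d => c.depth + d.depth
decreasing_by all_goals simp only [Ctx.depth]; omega

end Rebase

theorem DerivH.of_commutesAt {R : Sequent → Sequent → Prop} (hR : ∀ c d, CommutesAt R c d)
    (hcongr : ∀ ⦃Γ Δ Δ' Γ'⦄, Γ ≋ Δ → R Δ Δ' → Δ' ≋ Γ' → R Γ Γ')
    {n : ℕ} {G G' : Sequent} (hG : DerivH n G) (hGG' : R G G') : DerivH n G' := by
  induction hG generalizing G' with
  | id n c a =>
    obtain ⟨c', hG', -⟩ := (hR c _).one_hole hcongr (by simp [BracketFree]) hGG'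
    exact .exch hG'.symm (.id n c' a)
  | and _ _ ihA ihB =>
    obtain ⟨c', hG', hW⟩ := (hR _ _).one_hole hcongr (by simp [BracketFree]) hGG'
    exact .exch hG'.symm (.and (ihA (hW _)) (ihB (hW _)))
  | or _ ih =>
    obtain ⟨c', hG', hW⟩ := (hR _ _).one_hole hcongr (by simp [BracketFree]) hGG'
    exact .exch hG'.symm (.or (ih (hW _)))
  | box _ ih =>
    obtain ⟨c', hG', hW⟩ := (hR _ _).one_hole hcongr (by simp [BracketFree]) hGG'
    exact .exch hG'.symm (.box (ih (hW _)))
  | dia c d hd _ ih =>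
    obtain ⟨c', d', hd', hG', hW⟩ := hR c d (by simp [BracketFree]) hGG'
    exact .exch hG'.symm (.dia c' d' (hd' hd) (ih (hW _ _)))
  | exch hΓ _ ih => exact ih (hcongr hΓ hGG' (.refl _))
  | up _ ih => exact .up (ih hGG')

/-- the rebasing rule is height-preserving admissible. -/
theorem rebase_admissible (h : ℕ) (c d : Ctx) (Δ' : Sequent)
    (hdepth : 0 < d.depth)
    (hd : DerivH h (c.fill (d.fill [] ++ [.nest Δ']))) :
    DerivH h (c.fill (d.fill Δ')) :=
  hd.of_commutesAt Rebase.commutesAt (fun _ _ _ _ => .equiv)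
    ((Rebase.of_depth_pos hdepth Δ').fill c)
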